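/- If x̂⁻ is an unbiased estimate of the predicted state and d̂ is the unbiased unknown-input estimate with M C G = I, then the time-updated estimate x̂* = x̂⁻ + G d̂ is an unbiased estimate of the true state x⁺ = A x + B u + G d + w (with zero-mean w, v), i.e., E[x̂* − x⁺] = 0. -/
import Mathlib
open Matrix MeasureTheory

private lemma integral_mulVec {Ω : Type*} [MeasureSpace Ω] (μ : Measure Ω)
    {a b : ℕ} (N : Matrix (Fin a) (Fin b) ℝ) (f : Ω → Fin b → ℝ)
    (hf : Integrable f μ) :
    ∫ ω, N.mulVec (f ω) ∂μ = N.mulVec (∫ ω, f ω ∂μ) := by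
  have := (LinearMap.toContinuousLinearMap (Matrix.mulVecLin N)).integral_comp_comm hf
  simpa using this

/-- Unbiasedness of the time-updated estimate x̂* = x̂⁻ + G d̂:
E[x̂* − x⁺] = 0 where x⁺ = A x + B u + G d + w. -/
theorem time_update_unbiased {n m p l : ℕ}
    {Ω : Type*} [MeasureSpace Ω] (μ : Measure Ω) [IsProbabilityMeasure μ]
    (A : Matrix (Fin n) (Fin n) ℝ) (B : Matrix (Fin n) (Fin m) ℝ)
    (G : Matrix (Fin n) (Fin p) ℝ) (C : Matrix (Fin l) (Fin n) ℝ)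
    (M : Matrix (Fin p) (Fin l) ℝ)
    (x : Fin n → ℝ) (u : Fin m → ℝ) (d : Fin p → ℝ)
    (w : Ω → Fin n → ℝ) (v : Ω → Fin l → ℝ) (xhat : Ω → Fin n → ℝ)
    (hw : Integrable w μ) (hv : Integrable v μ) (hxhat : Integrable xhat μ)
    (hwm : ∫ ω, w ω ∂μ = 0) (hvm : ∫ ω, v ω ∂μ = 0)
    (hxm : ∫ ω, (fun ω => xhat ω - x) ω ∂μ = 0)
    (hM : M * (C * G) = 1) :
    (∫ ω, (fun ω =>
        let xminus := A.mulVec (xhat ω) + B.mulVec u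
        let xplus := A.mulVec x + B.mulVec u + G.mulVec d + w ω
        let y := C.mulVec xplus + v ω
        let dhat := M.mulVec (y - C.mulVec xminus)
        (xminus + G.mulVec dhat) - xplus) ω ∂μ) = 0 := by
  have hGd : ∀ z : Fin p → ℝ, M.mulVec (C.mulVec (G.mulVec z)) = z := by
    intro z
    rw [Matrix.mulVec_mulVec, Matrix.mulVec_mulVec, Matrix.mul_assoc, hM, Matrix.one_mulVec]
  set F := A - G * M * C * A with hF
  set W := G * M * C - 1 with hW
  set V := G * M with hV
  have hpt : ∀ ω, (let xminus := A.mulVec (xhat ω) + B.mulVec u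
        let xplus := A.mulVec x + B.mulVec u + G.mulVec d + w ω
        let y := C.mulVec xplus + v ω
        let dhat := M.mulVec (y - C.mulVec xminus)
        (xminus + G.mulVec dhat) - xplus)
      = F.mulVec (xhat ω - x) + W.mulVec (w ω) + V.mulVec (v ω) := by
    intro ω
    simp only [hF, hW, hV, Matrix.mulVec_add, Matrix.mulVec_sub, Matrix.sub_mulVec,
      Matrix.one_mulVec, ← Matrix.mulVec_mulVec, hGd]
    abel
  have hdiff : Integrable (fun ω => xhat ω - x) μ :=
    hxhat.sub (integrable_const x)
  calc (∫ ω, (fun ω =>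
        let xminus := A.mulVec (xhat ω) + B.mulVec u
        let xplus := A.mulVec x + B.mulVec u + G.mulVec d + w ω
        let y := C.mulVec xplus + v ω
        let dhat := M.mulVec (y - C.mulVec xminus)
        (xminus + G.mulVec dhat) - xplus) ω ∂μ)
      = ∫ ω, (F.mulVec (xhat ω - x) + W.mulVec (w ω) + V.mulVec (v ω)) ∂μ := by
        simp only [hpt]
    _ = (∫ ω, F.mulVec (xhat ω - x) ∂μ) + (∫ ω, W.mulVec (w ω) ∂μ)
          + (∫ ω, V.mulVec (v ω) ∂μ) := by
        have h1 : Integrable (fun ω => F.mulVec (xhat ω - x)) μ :=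
          (LinearMap.toContinuousLinearMap (Matrix.mulVecLin F)).integrable_comp hdiff
        have h2 : Integrable (fun ω => W.mulVec (w ω)) μ :=
          (LinearMap.toContinuousLinearMap (Matrix.mulVecLin W)).integrable_comp hw
        have h3 : Integrable (fun ω => V.mulVec (v ω)) μ :=
          (LinearMap.toContinuousLinearMap (Matrix.mulVecLin V)).integrable_comp hv
        rw [show (∫ ω, (F.mulVec (xhat ω - x) + W.mulVec (w ω) + V.mulVec (v ω)) ∂μ)
            = (∫ ω, (F.mulVec (xhat ω - x) + W.mulVec (w ω)) ∂μ) + ∫ ω, V.mulVec (v ω) ∂μ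
          from integral_add (h1.add h2) h3, integral_add h1 h2]
    _ = 0 := by
        rw [integral_mulVec μ F _ hdiff, integral_mulVec μ W _ hw,
          integral_mulVec μ V _ hv, hxm, hwm, hvm]
        simp
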